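/- arXiv:0709.2171 — 2 statements merged into one kernel-verified Lean document; each statement's English description precedes it below -/
import Mathlib

section
/- Let λ ≥ 1, t₀ ∈ ℝ, and let h : ℝ → ℝ be continuously differentiable with h(s) = 0 for all s ≤ t₀. Define u(t) = ∫_{t₀}^{t} (sin(√λ·(t − s))/√λ)·h(s) ds. Then for every t ≥ t₀, (λ + 1)·u(t)² ≤ 8·( (λ + 1)⁻¹·h(t)² + (t − t₀)·(λ + 1)⁻¹·∫_{t₀}^{t} h'(s)² ds ). -/
open MeasureTheory intervalIntegral Set Real

/-! Integrating by parts once, `λ u(t) = h(t) - ∫_{t₀}^{t} cos(√λ (t - s)) h'(s) ds`, the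
boundary term at `t₀` vanishing because `h(t₀) = 0`. Cauchy–Schwarz bounds the square of the
integral by `(t - t₀) ∫ h'²`, and `λ ≥ 1` gives `(λ + 1)² ≤ 4 λ²`. -/

theorem sq_intervalIntegral_le {f : ℝ → ℝ} {a b : ℝ} (hab : a ≤ b)
    (hf : IntervalIntegrable f volume a b)
    (hf2 : IntervalIntegrable (fun x => f x ^ 2) volume a b) :
    (∫ x in a..b, f x) ^ 2 ≤ (b - a) * ∫ x in a..b, f x ^ 2 := by
  set J := ∫ x in a..b, f x
  -- integrate `2 c f - c² ≤ f²`, then optimise over `c`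
  have hc : ∀ c : ℝ, 2 * c * J - c ^ 2 * (b - a) ≤ ∫ x in a..b, f x ^ 2 := by
    intro c
    have hmono := integral_mono_on (f := fun x => 2 * c * f x - c ^ 2) hab
      ((hf.const_mul (2 * c)).sub intervalIntegrable_const) hf2
      fun x _ => by nlinarith [sq_nonneg (f x - c)]
    rwa [integral_sub (hf.const_mul _) intervalIntegrable_const,
      intervalIntegral.integral_const_mul, intervalIntegral.integral_const, smul_eq_mul,
      mul_comm (b - a)] at hmono
  rcases hab.eq_or_lt with rfl | hlt
  · simp [J]
  · have hL : 0 < b - a := sub_pos.mpr hlt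
    calc J ^ 2 = (b - a) * (2 * (J / (b - a)) * J - (J / (b - a)) ^ 2 * (b - a)) := by
          field_simp; ring
      _ ≤ (b - a) * ∫ x in a..b, f x ^ 2 := mul_le_mul_of_nonneg_left (hc _) hL.le

theorem sq_intervalIntegral_mul_le {w f : ℝ → ℝ} {a b : ℝ} (hab : a ≤ b)
    (hw : ContinuousOn w (uIcc a b)) (hw1 : ∀ x ∈ uIcc a b, |w x| ≤ 1)
    (hf : IntervalIntegrable f volume a b)
    (hf2 : IntervalIntegrable (fun x => f x ^ 2) volume a b) :
    (∫ x in a..b, w x * f x) ^ 2 ≤ (b - a) * ∫ x in a..b, f x ^ 2 := by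
  have hwf2 : IntervalIntegrable (fun x => (w x * f x) ^ 2) volume a b := by
    simpa only [mul_pow, Pi.pow_apply] using hf2.continuousOn_mul (hw.pow 2)
  calc (∫ x in a..b, w x * f x) ^ 2 ≤ (b - a) * ∫ x in a..b, (w x * f x) ^ 2 :=
        sq_intervalIntegral_le hab (hf.continuousOn_mul hw) hwf2
    _ ≤ (b - a) * ∫ x in a..b, f x ^ 2 := by
        refine mul_le_mul_of_nonneg_left (integral_mono_on hab hwf2 hf2 fun x hx => ?_)
          (sub_nonneg.mpr hab)
        have hwx : w x ^ 2 ≤ 1 :=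
          (sq_le_one_iff_abs_le_one _).mpr (hw1 x (Icc_subset_uIcc hx))
        rw [mul_pow]
        exact mul_le_of_le_one_left (sq_nonneg _) hwx

theorem sq_mul_integral_sin_div_mul_eq {a t₀ t : ℝ} (ha : a ≠ 0) {h h' : ℝ → ℝ}
    (hh : ∀ s ∈ uIcc t₀ t, HasDerivAt h (h' s) s)
    (hh' : IntervalIntegrable h' volume t₀ t) :
    a ^ 2 * ∫ s in t₀..t, sin (a * (t - s)) / a * h s =
      h t - cos (a * (t - t₀)) * h t₀ - ∫ s in t₀..t, cos (a * (t - s)) * h' s := by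
  have hv : ∀ s, HasDerivAt (fun s => cos (a * (t - s)) / a ^ 2) (sin (a * (t - s)) / a) s := by
    intro s
    have hphase : HasDerivAt (fun s => a * (t - s)) (-a) s := by
      simpa using ((hasDerivAt_id s).const_sub t).const_mul a
    exact (hphase.cos.div_const (a ^ 2)).congr_deriv (by field_simp)
  have hparts := integral_mul_deriv_eq_deriv_mul hh (fun s _ => hv s) hh'
    (by apply Continuous.intervalIntegrable; fun_prop)
  simp only [mul_comm (h _), mul_comm (h' _), div_mul_eq_mul_div, intervalIntegral.integral_div,
    sub_self, mul_zero, cos_zero] at hparts ⊢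
  rw [hparts]
  field_simp

theorem mul_sq_le_of_mul_eq_sub {lam u x J K : ℝ} (hlam : 1 ≤ lam) (hu : lam * u = x - J)
    (hJ : J ^ 2 ≤ K) :
    (lam + 1) * u ^ 2 ≤ 8 * (lam + 1)⁻¹ * (x ^ 2 + K) := by
  have hL : 0 < lam + 1 := by linarith
  rw [show 8 * (lam + 1)⁻¹ * (x ^ 2 + K) = 8 * (x ^ 2 + K) / (lam + 1) by ring,
    le_div_iff₀ hL]
  calc (lam + 1) * u ^ 2 * (lam + 1) ≤ 4 * (lam * u) ^ 2 := by
        nlinarith [sq_nonneg u, mul_nonneg (sq_nonneg u) (sub_nonneg.mpr hlam)]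
    _ ≤ 8 * (x ^ 2 + K) := by rw [hu]; nlinarith [sq_nonneg (x + J)]

theorem duhamel_energy_estimate
    (lam t₀ : ℝ) (hlam : 1 ≤ lam) (h : ℝ → ℝ)
    (hh : ContDiff ℝ 1 h) (hh0 : ∀ s ≤ t₀, h s = 0)
    (u : ℝ → ℝ)
    (hu : ∀ t : ℝ, u t = ∫ s in t₀..t,
      (Real.sin (Real.sqrt lam * (t - s)) / Real.sqrt lam) * h s) :
    ∀ t ≥ t₀,
      (lam + 1) * (u t) ^ 2 ≤
        8 * ((lam + 1)⁻¹ * (h t) ^ 2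
          + (t - t₀) * (lam + 1)⁻¹ * ∫ s in t₀..t, (deriv h s) ^ 2) := by
  intro t ht
  have hlam0 : 0 < lam := by linarith
  have hderiv : ∀ s ∈ uIcc t₀ t, HasDerivAt h (deriv h s) s :=
    fun s _ => (hh.differentiable one_ne_zero s).hasDerivAt
  have hcont : Continuous (deriv h) := hh.continuous_deriv le_rfl
  have hduhamel := sq_mul_integral_sin_div_mul_eq (sqrt_pos.mpr hlam0).ne' hderiv
    (hcont.intervalIntegrable _ _)
  rw [sq_sqrt hlam0.le, ← hu, hh0 t₀ le_rfl, mul_zero, sub_zero] at hduhamel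
  have hCS := sq_intervalIntegral_mul_le (w := fun s => cos (sqrt lam * (t - s))) ht
    (by fun_prop) (fun s _ => abs_cos_le_one _) (hcont.intervalIntegrable _ _)
    ((hcont.pow 2).intervalIntegrable _ _)
  calc (lam + 1) * u t ^ 2
      ≤ 8 * (lam + 1)⁻¹ * (h t ^ 2 + (t - t₀) * ∫ s in t₀..t, deriv h s ^ 2) :=
        mul_sq_le_of_mul_eq_sub hlam hduhamel hCS
    _ = _ := by ring
end

section
/- Let H be a complex Hilbert space, (e_j)_{j∈ℕ} a Hilbert basis of H, and A : H → H a continuous linear map with A e_j = λ_j • e_j for every j, where λ_j ≥ 0 are nonnegative reals. For λ ≥ 0 and t ∈ ℝ set g(λ, t) = sin(√λ·t)/√λ if λ > 0 and g(0, t) = t. Then for every ψ ∈ H and every t ∈ ℝ the family ( g(λ_j, t)·⟪e_j, ψ⟫ • e_j )_{j∈ℕ} is summable in H; denoting its sum by E(t), one has E(0) = 0, the map t ↦ E(t) is twice differentiable with second derivative E''(t) = −A(E(t)) for all t, and the derivative of E at 0 equals ψ. -/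
/-!
The wave equation `u'' = -A u` is the first-order system `(u, u')' = M (u, u')` on `H × H` with
`M (u, v) = (v, -A u)`, solved by `t ↦ exp (t • M) (0, ψ)`; its first component has the required
derivatives. The functional `⟪e j, ·⟫` intertwines `A` with multiplication by `λ j`, so it carries
this flow to the scalar flow of `u'' = -λ j u`, which by uniqueness for constant-coefficient linear
ODEs is `(g(λ j, t) c, cos (√(λ j) t) c)`. Hence the Fourier coefficients of the solution are
`g(λ j, t) ⟪e j, ψ⟫`, and it is the sum of the given series.
-/

open scoped InnerProductSpace

/-- The wave kernel `g(λ, t) = sin(√λ t)/√λ` for `λ > 0` and `g(0, t) = t`. -/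
noncomputable def waveKernel (l t : ℝ) : ℝ :=
  if 0 < l then Real.sin (Real.sqrt l * t) / Real.sqrt l else t

open NormedSpace

section ExpFlow

variable {𝕂 E F : Type*} [RCLike 𝕂] [NormedAddCommGroup E] [NormedSpace 𝕂 E] [CompleteSpace E]
  [NormedAddCommGroup F] [NormedSpace 𝕂 F] [CompleteSpace F]

theorem hasDerivAt_exp_smul_apply (N : E →L[𝕂] E) (x : E) (t : 𝕂) :
    HasDerivAt (fun s : 𝕂 => exp (s • N) x) (N (exp (t • N) x)) t := by
  simpa using (hasDerivAt_exp_smul_const' N t).clm_apply (hasDerivAt_const t x)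

theorem eq_exp_smul_apply_of_hasDerivAt {N : E →L[𝕂] E} {f : 𝕂 → E}
    (hf : ∀ t, HasDerivAt f (N (f t)) t) (t : 𝕂) : f t = exp (t • N) (f 0) := by
  have hderiv : ∀ s, HasDerivAt (fun u => exp ((t - u) • N) (f u)) 0 s := fun s => by
    have hexp := (hasDerivAt_exp_smul_const N (t - s)).scomp s ((hasDerivAt_id s).const_sub t)
    simpa using hexp.clm_apply (hf s)
  simpa using is_const_of_deriv_eq_zero (fun s => (hderiv s).differentiableAt)
    (fun s => (hderiv s).deriv) t 0

theorem map_exp_smul_apply_of_comp_eq {N : E →L[𝕂] E} {N' : F →L[𝕂] F} {L : E →L[𝕂] F}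
    (h : L ∘L N = N' ∘L L) (t : 𝕂) (x : E) : L (exp (t • N) x) = exp (t • N') (L x) := by
  have hf : ∀ s, HasDerivAt (fun u => L (exp (u • N) x)) (N' (L (exp (s • N) x))) s := fun s =>
    (L.hasFDerivAt.comp_hasDerivAt s (hasDerivAt_exp_smul_apply N x s)).congr_deriv
      (DFunLike.congr_fun h _)
  simpa using eq_exp_smul_apply_of_hasDerivAt hf t

end ExpFlow

theorem hasDerivAt_waveKernel (l t : ℝ) :
    HasDerivAt (waveKernel l) (Real.cos (√l * t)) t := by
  unfold waveKernel
  rcases lt_or_ge 0 l with hpos | hnonpos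
  · have hs : √l ≠ 0 := (Real.sqrt_pos.2 hpos).ne'
    simp only [hpos, if_true]
    exact ((((hasDerivAt_id' t).const_mul √l).sin).div_const √l).congr_deriv (by field_simp)
  · simp only [not_lt.2 hnonpos, if_false, Real.sqrt_eq_zero'.2 hnonpos, zero_mul, Real.cos_zero]
    exact hasDerivAt_id t

theorem hasDerivAt_cos_sqrt_mul {l : ℝ} (hl : 0 ≤ l) (t : ℝ) :
    HasDerivAt (fun s => Real.cos (√l * s)) (-(l * waveKernel l t)) t := by
  refine (((hasDerivAt_id' t).const_mul √l).cos).congr_deriv ?_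
  rcases hl.lt_or_eq with hpos | rfl
  · have hs : √l ≠ 0 := (Real.sqrt_pos.2 hpos).ne'
    rw [waveKernel, if_pos hpos]
    field_simp
    rw [Real.sq_sqrt hl, mul_comm]
  · simp

section Wave

variable {R M N : Type*} [Ring R] [TopologicalSpace M] [AddCommGroup M] [IsTopologicalAddGroup M]
  [Module R M] [TopologicalSpace N] [AddCommGroup N] [IsTopologicalAddGroup N] [Module R N]

def waveGenerator (A : M →L[R] M) : M × M →L[R] M × M :=
  (ContinuousLinearMap.snd R M M).prod (-(A ∘L ContinuousLinearMap.fst R M M))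

@[simp]
theorem waveGenerator_apply (A : M →L[R] M) (x : M × M) : waveGenerator A x = (x.2, -A x.1) :=
  rfl

theorem prodMap_comp_waveGenerator {A : M →L[R] M} {B : N →L[R] N} {L : M →L[R] N}
    (h : L ∘L A = B ∘L L) : L.prodMap L ∘L waveGenerator A = waveGenerator B ∘L L.prodMap L := by
  refine ContinuousLinearMap.ext fun x => Prod.ext rfl ?_
  simpa using congr(-$h x.1)

end Wave

section RealWave

variable {E F : Type*} [NormedAddCommGroup E] [NormedSpace ℝ E] [NormedAddCommGroup F]
  [NormedSpace ℝ F]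

noncomputable def waveFlow (A : E →L[ℝ] E) (x : E × E) (t : ℝ) : E × E :=
  exp (t • waveGenerator A) x

@[simp]
theorem waveFlow_zero (A : E →L[ℝ] E) (x : E × E) : waveFlow A x 0 = x := by
  simp [waveFlow]

variable [CompleteSpace E] [CompleteSpace F]

theorem hasDerivAt_waveFlow (A : E →L[ℝ] E) (x : E × E) (t : ℝ) :
    HasDerivAt (waveFlow A x) (waveGenerator A (waveFlow A x t)) t :=
  hasDerivAt_exp_smul_apply _ x t

theorem hasDerivAt_waveFlow_fst (A : E →L[ℝ] E) (x : E × E) (t : ℝ) :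
    HasDerivAt (fun s => (waveFlow A x s).1) (waveFlow A x t).2 t :=
  (hasFDerivAt_fst (p := waveFlow A x t)).comp_hasDerivAt t (hasDerivAt_waveFlow A x t)

theorem hasDerivAt_waveFlow_snd (A : E →L[ℝ] E) (x : E × E) (t : ℝ) :
    HasDerivAt (fun s => (waveFlow A x s).2) (-A (waveFlow A x t).1) t :=
  (hasFDerivAt_snd (p := waveFlow A x t)).comp_hasDerivAt t (hasDerivAt_waveFlow A x t)

theorem waveFlow_smul_id {l : ℝ} (hl : 0 ≤ l) (c : F) (t : ℝ) :
    waveFlow (l • ContinuousLinearMap.id ℝ F) (0, c) t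
      = (waveKernel l t • c, Real.cos (√l * t) • c) := by
  have hf : ∀ s, HasDerivAt (fun u => (waveKernel l u • c, Real.cos (√l * u) • c))
      (waveGenerator (l • ContinuousLinearMap.id ℝ F)
        (waveKernel l s • c, Real.cos (√l * s) • c)) s := fun s => by
    simpa [smul_smul, mul_comm l] using
      ((hasDerivAt_waveKernel l s).smul_const c).prodMk ((hasDerivAt_cos_sqrt_mul hl s).smul_const c)
  simpa [waveFlow, waveKernel] using (eq_exp_smul_apply_of_hasDerivAt hf t).symm

theorem map_waveFlow_fst_of_comp_eq {A : E →L[ℝ] E} {L : E →L[ℝ] F} {l : ℝ}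
    (hl : 0 ≤ l) (h : L ∘L A = l • L) (ψ : E) (t : ℝ) :
    L (waveFlow A (0, ψ) t).1 = waveKernel l t • L ψ := by
  have hL : L ∘L A = (l • ContinuousLinearMap.id ℝ F) ∘L L := by rw [h]; ext; simp
  have hflow := map_exp_smul_apply_of_comp_eq (prodMap_comp_waveGenerator hL) t (0, ψ)
  calc L (waveFlow A (0, ψ) t).1
      = (waveFlow (l • ContinuousLinearMap.id ℝ F) (0, L ψ) t).1 := by
        simpa [waveFlow] using congr(($hflow).1)
    _ = waveKernel l t • L ψ := by rw [waveFlow_smul_id hl]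

end RealWave

theorem HilbertBasis.inner_apply_of_apply_eq_smul {ι 𝕜 H : Type*} [RCLike 𝕜]
    [NormedAddCommGroup H] [InnerProductSpace 𝕜 H] (e : HilbertBasis ι 𝕜 H) {A : H →L[𝕜] H}
    {μ : ι → 𝕜} (hA : ∀ i, A (e i) = μ i • e i) (j : ι) (x : H) :
    ⟪e j, A x⟫_𝕜 = μ j * ⟪e j, x⟫_𝕜 := by
  have : innerSL 𝕜 (e j) ∘L A = μ j • innerSL 𝕜 (e j) := by
    refine ContinuousLinearMap.ext_on (s := Set.range e)
      (Submodule.dense_iff_topologicalClosure_eq_top.2 e.dense_span) ?_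
    rintro _ ⟨i, rfl⟩
    rcases eq_or_ne i j with rfl | hij
    · simp [hA]
    · simp [hA, e.orthonormal.inner_eq_zero hij.symm]
  simpa using congr($this x)

theorem abstract_wave_solution
    {H : Type*} [NormedAddCommGroup H] [InnerProductSpace ℂ H] [CompleteSpace H]
    (e : HilbertBasis ℕ ℂ H) (A : H →L[ℂ] H) (lam : ℕ → ℝ)
    (hlam : ∀ j, 0 ≤ lam j)
    (hA : ∀ j, A (e j) = (lam j : ℂ) • e j) :
    ∀ ψ : H,
      (∀ t : ℝ, Summable (fun j : ℕ =>
        ((waveKernel (lam j) t : ℂ) * ⟪e j, ψ⟫_ℂ) • e j)) ∧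
      (let E : ℝ → H := fun t => ∑' j : ℕ,
        ((waveKernel (lam j) t : ℂ) * ⟪e j, ψ⟫_ℂ) • e j
       E 0 = 0 ∧ Differentiable ℝ E ∧ Differentiable ℝ (deriv E) ∧
        (∀ t : ℝ, deriv (deriv E) t = -(A (E t))) ∧
        HasDerivAt E ψ 0) := by
  intro ψ
  set Φ := waveFlow (A.restrictScalars ℝ) (0, ψ)
  have hcoef (t : ℝ) (j : ℕ) : ⟪e j, (Φ t).1⟫_ℂ = waveKernel (lam j) t * ⟪e j, ψ⟫_ℂ := by
    have hL : (innerSL ℂ (e j)).restrictScalars ℝ ∘L A.restrictScalars ℝ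
        = lam j • (innerSL ℂ (e j)).restrictScalars ℝ := by
      ext x
      simp [e.inner_apply_of_apply_eq_smul hA, Complex.real_smul]
    simpa [Complex.real_smul] using map_waveFlow_fst_of_comp_eq (hlam j) hL ψ t
  have hsum (t : ℝ) :
      HasSum (fun j => ((waveKernel (lam j) t : ℂ) * ⟪e j, ψ⟫_ℂ) • e j) (Φ t).1 := by
    simpa [e.repr_apply_apply, hcoef] using e.hasSum_repr (Φ t).1
  refine ⟨fun t => (hsum t).summable, ?_⟩
  intro E
  have hE : E = fun t => (Φ t).1 := funext fun t => (hsum t).tsum_eq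
  have hderiv : deriv E = fun t => (Φ t).2 :=
    hE ▸ funext fun t => (hasDerivAt_waveFlow_fst (A.restrictScalars ℝ) (0, ψ) t).deriv
  rw [hderiv, hE]
  refine ⟨by simp [Φ], fun t => (hasDerivAt_waveFlow_fst _ _ t).differentiableAt,
    fun t => (hasDerivAt_waveFlow_snd _ _ t).differentiableAt,
    fun t => (hasDerivAt_waveFlow_snd _ _ t).deriv, by simpa [Φ] using hasDerivAt_waveFlow_fst _ _ 0⟩
end
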